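/- Let T be a standard Young tableau with n ≥ 2 entries. Then the set of 1-minors of T − n equals the set { M − (n−1) : M ∈ M¹(T) }, i.e., the 1-minors of T − n are exactly the tableaux obtained by deleting the entry n−1 from the 1-minors of T. -/
import Mathlib


/-- A standard Young tableau with `n` entries, encoded by its entry function
`entry : ℕ × ℕ → ℕ`: `entry (i, j) = 0` means there is no cell in row `i` and
column `j` (both 0-indexed), and otherwise `entry (i, j)` is the label
(one of `1, …, n`) of the cell `(i, j)`.  Rows increase from left to right and
columns increase from top to bottom. -/
structure SYT (n : ℕ) where
  entry : ℕ × ℕ → ℕ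
  /-- the set of cells is the Young diagram of a partition -/
  diagram : ∀ i j i' j', i' ≤ i → j' ≤ j → entry (i, j) ≠ 0 → entry (i', j') ≠ 0
  /-- every label is at most `n` -/
  le_n : ∀ c, entry c ≤ n
  /-- every label in `1, …, n` appears in some cell -/
  exists_cell : ∀ k, 1 ≤ k → k ≤ n → ∃ c, entry c = k
  /-- each label appears in at most one cell -/
  inj : ∀ c c', entry c ≠ 0 → entry c = entry c' → c = c'
  /-- rows increase from left to right -/
  row_lt : ∀ i j, entry (i, j + 1) ≠ 0 → entry (i, j) < entry (i, j + 1)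
  /-- columns increase from top to bottom -/
  col_lt : ∀ i j, entry (i + 1, j) ≠ 0 → entry (i, j) < entry (i + 1, j)

/-- The shape (set of cells) of an entry function. -/
def shapeOf (f : ℕ × ℕ → ℕ) : Set (ℕ × ℕ) := {c | f c ≠ 0}

/-- The shape of a standard Young tableau: the set of cells of its
underlying Young diagram. -/
def SYT.shape {n : ℕ} (T : SYT n) : Set (ℕ × ℕ) := shapeOf T.entry

/-- `c` is an outer corner: a cell with no cell immediately to its right and
no cell immediately below it. -/
def IsOuterCorner (f : ℕ × ℕ → ℕ) (c : ℕ × ℕ) : Prop :=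
  f c ≠ 0 ∧ f (c.1, c.2 + 1) = 0 ∧ f (c.1 + 1, c.2) = 0

/-- Jeu de taquin sliding: starting with a vacant cell `c`, repeatedly slide
into the vacant cell the smaller of the entries immediately to the right of and
immediately below it, until neither exists.  `fuel` bounds the number of steps;
any `fuel ≥ n` suffices for a tableau with `n` entries, and extra fuel does not
change the result once the process has terminated. -/
def jdtAux : ℕ → (ℕ × ℕ → ℕ) → ℕ × ℕ → (ℕ × ℕ → ℕ)
  | 0, f, _ => f
  | fuel + 1, f, c =>
    let r := f (c.1, c.2 + 1)
    let b := f (c.1 + 1, c.2)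
    if r = 0 ∧ b = 0 then f
    else if b = 0 ∨ (r ≠ 0 ∧ r < b) then
      jdtAux fuel (Function.update (Function.update f c r) (c.1, c.2 + 1) 0) (c.1, c.2 + 1)
    else
      jdtAux fuel (Function.update (Function.update f c b) (c.1 + 1, c.2) 0) (c.1 + 1, c.2)

open Classical

/-- Deletion of the entry `m` from an entry function: vacate the cell
containing `m`, perform the jeu de taquin sliding process, and then renumber
each entry `p > m` to `p - 1`. -/
noncomputable def delRaw (fuel : ℕ) (f : ℕ × ℕ → ℕ) (m : ℕ) : ℕ × ℕ → ℕ :=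
  if h : 0 < m ∧ ∃ c, f c = m then
    let g := jdtAux fuel (Function.update f (Classical.choose h.2) 0) (Classical.choose h.2)
    fun x => if m < g x then g x - 1 else g x
  else f

/-- The 1-minor `T - m` of a standard Young tableau `T` with `n` entries,
as an entry function (a standard Young tableau with `n - 1` entries). -/
noncomputable def SYT.del {n : ℕ} (T : SYT n) (m : ℕ) : ℕ × ℕ → ℕ :=
  delRaw n T.entry m

/-- The set of 1-minors `M¹(T) = {T - m : 1 ≤ m ≤ n}` of `T`. -/
noncomputable def minors1 {n : ℕ} (T : SYT n) : Set (ℕ × ℕ → ℕ) :=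
  {g | ∃ m, 1 ≤ m ∧ m ≤ n ∧ g = T.del m}

/-- The multiset of 1-minors `⟦T - m : 1 ≤ m ≤ n⟧` of `T`,
counted with multiplicities. -/
noncomputable def minors1M {n : ℕ} (T : SYT n) : Multiset (ℕ × ℕ → ℕ) :=
  (Finset.Icc 1 n).val.map T.del

section AuxProofs

lemma jdt_stop (fuel : ℕ) (f : ℕ × ℕ → ℕ) (c : ℕ × ℕ)
    (h1 : f (c.1, c.2 + 1) = 0) (h2 : f (c.1 + 1, c.2) = 0) :
    jdtAux fuel f c = f := by
  cases fuel <;> simp [jdtAux, h1, h2]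

lemma jdt_pres (Q : ℕ → Prop) (hQ0 : Q 0) :
    ∀ (fuel : ℕ) (f : ℕ × ℕ → ℕ) (c : ℕ × ℕ), (∀ x, Q (f x)) →
      ∀ x, Q (jdtAux fuel f c x) := by
  intro fuel
  induction fuel with
  | zero => intro f c h x; simpa [jdtAux] using h x
  | succ k ih =>
    intro f c h x
    have hstep : ∀ (v : ℕ) (a b : ℕ × ℕ), Q v →
        ∀ y, Q (Function.update (Function.update f a v) b 0 y) := by
      intro v a b hv y
      rcases eq_or_ne y b with rfl | hyb
      · simpa using hQ0
      rcases eq_or_ne y a with rfl | hya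
      · simpa [Function.update_of_ne hyb] using hv
      · simpa [Function.update_of_ne hyb, Function.update_of_ne hya] using h y
    by_cases h1 : f (c.1, c.2 + 1) = 0 ∧ f (c.1 + 1, c.2) = 0
    · rw [jdt_stop _ _ _ h1.1 h1.2]; exact h x
    · simp only [jdtAux]
      rw [if_neg h1]
      by_cases h2 : f (c.1 + 1, c.2) = 0 ∨ (f (c.1, c.2 + 1) ≠ 0 ∧ f (c.1, c.2 + 1) < f (c.1 + 1, c.2))
      · rw [if_pos h2]; exact ih _ _ (hstep _ _ _ (h _)) x
      · rw [if_neg h2]; exact ih _ _ (hstep _ _ _ (h _)) x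

end AuxProofs
section MainLemma

lemma trivial_q (n : ℕ) (_hn : 0 < n) (f : ℕ × ℕ → ℕ) (cN : ℕ × ℕ)
    (h2 : f cN = n) (h3 : ∀ x, x ≠ cN → f x < n)
    (h4a : f (cN.1, cN.2 + 1) = 0) (h4b : f (cN.1 + 1, cN.2) = 0) :
    f = Function.update (Function.update f cN 0) cN n ∧
      Function.update f cN 0 cN = 0 ∧ f cN = n ∧
      f (cN.1, cN.2 + 1) = 0 ∧ f (cN.1 + 1, cN.2) = 0 ∧
      ∀ x, x ≠ cN → f x ≠ n := by
  refine ⟨?_, by simp, h2, h4a, h4b, fun x hx => Nat.ne_of_lt (h3 x hx)⟩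
  funext x
  rcases eq_or_ne x cN with rfl | hx
  · simp [h2]
  · simp [Function.update_of_ne hx]

end MainLemma
lemma jdt_main (n : ℕ) (hn : 0 < n) :
    ∀ (fuel : ℕ) (f : ℕ × ℕ → ℕ) (c cN : ℕ × ℕ),
      f c = 0 → f cN = n → (∀ x, x ≠ cN → f x < n) →
      f (cN.1, cN.2 + 1) = 0 → f (cN.1 + 1, cN.2) = 0 →
      c ≠ cN → c ≠ (cN.1, cN.2 + 1) → c ≠ (cN.1 + 1, cN.2) →
      ∃ q, jdtAux fuel f c = Function.update (jdtAux fuel (Function.update f cN 0) c) q n ∧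
        jdtAux fuel (Function.update f cN 0) c q = 0 ∧
        jdtAux fuel f c q = n ∧
        jdtAux fuel f c (q.1, q.2 + 1) = 0 ∧
        jdtAux fuel f c (q.1 + 1, q.2) = 0 ∧
        ∀ x, x ≠ q → jdtAux fuel f c x ≠ n := by
  intro fuel
  induction fuel with
  | zero =>
    intro f c cN h1 h2 h3 h4a h4b h5 h7a h7b
    exact ⟨cN, by simpa [jdtAux] using trivial_q n hn f cN h2 h3 h4a h4b⟩
  | succ k ih =>
    intro f c cN h1 h2 h3 h4a h4b h5 h7a h7b
    have hcR : c ≠ (c.1, c.2 + 1) := by simp [Prod.ext_iff]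
    have hcB : c ≠ (c.1 + 1, c.2) := by simp [Prod.ext_iff]
    have hRB : (c.1, c.2 + 1) ≠ (c.1 + 1, c.2) := by simp [Prod.ext_iff]
    by_cases hrb : f (c.1, c.2 + 1) = 0 ∧ f (c.1 + 1, c.2) = 0
    · -- both neighbours empty: slide stops on both sides
      have hr' : Function.update f cN 0 (c.1, c.2 + 1) = 0 := by
        rcases eq_or_ne (c.1, c.2 + 1) cN with h | h
        · rw [h, Function.update_self]
        · rw [Function.update_of_ne h, hrb.1]
      have hb' : Function.update f cN 0 (c.1 + 1, c.2) = 0 := by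
        rcases eq_or_ne (c.1 + 1, c.2) cN with h | h
        · rw [h, Function.update_self]
        · rw [Function.update_of_ne h, hrb.2]
      rw [jdt_stop _ _ _ hrb.1 hrb.2, jdt_stop _ _ _ hr' hb']
      exact ⟨cN, trivial_q n hn f cN h2 h3 h4a h4b⟩
    · by_cases hB : f (c.1 + 1, c.2) = 0 ∨
          (f (c.1, c.2 + 1) ≠ 0 ∧ f (c.1, c.2 + 1) < f (c.1 + 1, c.2))
      · -- the right neighbour slides
        have hr0 : f (c.1, c.2 + 1) ≠ 0 := by
          rcases hB with h | h
          · exact fun hr => hrb ⟨hr, h⟩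
          · exact h.1
        have hfeq : jdtAux (k + 1) f c
            = jdtAux k (Function.update (Function.update f c (f (c.1, c.2 + 1)))
                (c.1, c.2 + 1) 0) (c.1, c.2 + 1) := by
          simp only [jdtAux]; rw [if_neg hrb, if_pos hB]
        rcases eq_or_ne (c.1, c.2 + 1) cN with hcase | hcase
        · -- the right neighbour is the maximal entry n
          subst hcase
          have hb0 : f (c.1 + 1, c.2) = 0 := by
            rcases hB with h | h
            · exact h
            · exact absurd h.2 (by have := h3 _ hRB.symm; omega)
          -- right-hand side stops immediately
          have hstopR : jdtAux (k + 1) (Function.update f (c.1, c.2 + 1) 0) c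
              = Function.update f (c.1, c.2 + 1) 0 := by
            apply jdt_stop
            · exact Function.update_self _ _ _
            · rw [Function.update_of_ne hRB.symm]; exact hb0
          -- left-hand side: one step, then stop
          rw [hfeq, hstopR, h2]
          have hstopL : jdtAux k (Function.update (Function.update f c n) (c.1, c.2 + 1) 0)
                (c.1, c.2 + 1)
              = Function.update (Function.update f c n) (c.1, c.2 + 1) 0 := by
            apply jdt_stop
            · show Function.update (Function.update f c n) (c.1, c.2 + 1) 0 (c.1, c.2 + 2) = 0
              rw [Function.update_of_ne (by simp), Function.update_of_ne (Ne.symm h7a)]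
              exact h4a
            · show Function.update (Function.update f c n) (c.1, c.2 + 1) 0 (c.1 + 1, c.2 + 1) = 0
              rw [Function.update_of_ne (by simp), Function.update_of_ne (Ne.symm h7b)]
              exact h4b
          rw [hstopL]
          refine ⟨c, ?_, ?_, ?_, ?_, ?_, ?_⟩
          · funext x
            rcases eq_or_ne x c with rfl | hxc
            · rw [Function.update_of_ne hcR, Function.update_self, Function.update_self]
            · rcases eq_or_ne x (c.1, c.2 + 1) with rfl | hxr
              · rw [Function.update_self, Function.update_of_ne hcR.symm,
                  Function.update_self]
              · rw [Function.update_of_ne hxr, Function.update_of_ne hxc,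
                  Function.update_of_ne hxc, Function.update_of_ne hxr]
          · rw [Function.update_of_ne hcR, h1]
          · rw [Function.update_of_ne hcR, Function.update_self]
          · exact Function.update_self _ _ _
          · rw [Function.update_of_ne hRB.symm, Function.update_of_ne hcB.symm]
            exact hb0
          · intro x hx
            rcases eq_or_ne x (c.1, c.2 + 1) with rfl | hxr
            · rw [Function.update_self]; omega
            · rw [Function.update_of_ne hxr, Function.update_of_ne hx]
              exact Nat.ne_of_lt (h3 x hxr)
        · -- the right neighbour is not the maximal entry: recurse
          have hmoves : (c.1, c.2 + 1) ≠ (cN.1, cN.2 + 1) := fun h => hr0 (by rw [h]; exact h4a)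
          have hmoves2 : (c.1, c.2 + 1) ≠ (cN.1 + 1, cN.2) := fun h => hr0 (by rw [h]; exact h4b)
          have hr'0 : Function.update f cN 0 (c.1, c.2 + 1) = f (c.1, c.2 + 1) :=
            Function.update_of_ne hcase _ _
          have hB' : Function.update f cN 0 (c.1 + 1, c.2) = 0 ∨
              (Function.update f cN 0 (c.1, c.2 + 1) ≠ 0 ∧
                Function.update f cN 0 (c.1, c.2 + 1) < Function.update f cN 0 (c.1 + 1, c.2)) := by
            rcases eq_or_ne (c.1 + 1, c.2) cN with hbc | hbc
            · left; rw [hbc, Function.update_self]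
            · rw [hr'0, Function.update_of_ne hbc]; exact hB
          have hrb' : ¬ (Function.update f cN 0 (c.1, c.2 + 1) = 0 ∧
              Function.update f cN 0 (c.1 + 1, c.2) = 0) := by
            rw [hr'0]; exact fun h => hr0 h.1
          have hfeq' : jdtAux (k + 1) (Function.update f cN 0) c
              = jdtAux k (Function.update (Function.update (Function.update f cN 0) c
                  (f (c.1, c.2 + 1))) (c.1, c.2 + 1) 0) (c.1, c.2 + 1) := by
            simp only [jdtAux]; rw [if_neg hrb', if_pos hB', hr'0]
          have hcomm : Function.update (Function.update (Function.update f cN 0) c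
                  (f (c.1, c.2 + 1))) (c.1, c.2 + 1) 0
              = Function.update (Function.update (Function.update f c (f (c.1, c.2 + 1)))
                  (c.1, c.2 + 1) 0) cN 0 := by
            rw [Function.update_comm (Ne.symm h5), Function.update_comm (Ne.symm hcase)]
          obtain ⟨q, e1, e2, e3, e4, e5, e6⟩ := ih
            (Function.update (Function.update f c (f (c.1, c.2 + 1))) (c.1, c.2 + 1) 0)
            (c.1, c.2 + 1) cN
            (Function.update_self _ _ _)
            (by rw [Function.update_of_ne (Ne.symm hcase), Function.update_of_ne (Ne.symm h5)]
                exact h2)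
            (by intro x hx
                rcases eq_or_ne x (c.1, c.2 + 1) with rfl | hxr
                · rw [Function.update_self]; exact hn
                · rcases eq_or_ne x c with rfl | hxc
                  · rw [Function.update_of_ne hxr, Function.update_self]
                    exact h3 _ hcase
                  · rw [Function.update_of_ne hxr, Function.update_of_ne hxc]
                    exact h3 x hx)
            (by rw [Function.update_of_ne (Ne.symm hmoves), Function.update_of_ne (Ne.symm h7a)]
                exact h4a)
            (by rw [Function.update_of_ne (Ne.symm hmoves2), Function.update_of_ne (Ne.symm h7b)]
                exact h4b)
            hcase hmoves hmoves2
          rw [hfeq, hfeq', hcomm]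
          exact ⟨q, e1, e2, e3, e4, e5, e6⟩
      · -- the bottom neighbour slides
        have hb0 : f (c.1 + 1, c.2) ≠ 0 := fun h => hB (Or.inl h)
        have hfeq : jdtAux (k + 1) f c
            = jdtAux k (Function.update (Function.update f c (f (c.1 + 1, c.2)))
                (c.1 + 1, c.2) 0) (c.1 + 1, c.2) := by
          simp only [jdtAux]; rw [if_neg hrb, if_neg hB]
        rcases eq_or_ne (c.1 + 1, c.2) cN with hcase | hcase
        · -- the bottom neighbour is the maximal entry n
          subst hcase
          have hr0 : f (c.1, c.2 + 1) = 0 := by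
            by_contra h
            exact hB (Or.inr ⟨h, by have := h3 _ hRB; omega⟩)
          have hstopR : jdtAux (k + 1) (Function.update f (c.1 + 1, c.2) 0) c
              = Function.update f (c.1 + 1, c.2) 0 := by
            apply jdt_stop
            · rw [Function.update_of_ne hRB]; exact hr0
            · exact Function.update_self _ _ _
          rw [hfeq, hstopR, h2]
          have hstopL : jdtAux k (Function.update (Function.update f c n) (c.1 + 1, c.2) 0)
                (c.1 + 1, c.2)
              = Function.update (Function.update f c n) (c.1 + 1, c.2) 0 := by
            apply jdt_stop
            · show Function.update (Function.update f c n) (c.1 + 1, c.2) 0 (c.1 + 1, c.2 + 1) = 0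
              rw [Function.update_of_ne (by simp), Function.update_of_ne (Ne.symm h7a)]
              exact h4a
            · show Function.update (Function.update f c n) (c.1 + 1, c.2) 0 (c.1 + 2, c.2) = 0
              rw [Function.update_of_ne (by simp), Function.update_of_ne (Ne.symm h7b)]
              exact h4b
          rw [hstopL]
          refine ⟨c, ?_, ?_, ?_, ?_, ?_, ?_⟩
          · funext x
            rcases eq_or_ne x c with rfl | hxc
            · rw [Function.update_of_ne hcB, Function.update_self, Function.update_self]
            · rcases eq_or_ne x (c.1 + 1, c.2) with rfl | hxb
              · rw [Function.update_self, Function.update_of_ne hcB.symm,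
                  Function.update_self]
              · rw [Function.update_of_ne hxb, Function.update_of_ne hxc,
                  Function.update_of_ne hxc, Function.update_of_ne hxb]
          · rw [Function.update_of_ne hcB, h1]
          · rw [Function.update_of_ne hcB, Function.update_self]
          · rw [Function.update_of_ne hRB, Function.update_of_ne hcR.symm]
            exact hr0
          · exact Function.update_self _ _ _
          · intro x hx
            rcases eq_or_ne x (c.1 + 1, c.2) with rfl | hxb
            · rw [Function.update_self]; omega
            · rw [Function.update_of_ne hxb, Function.update_of_ne hx]
              exact Nat.ne_of_lt (h3 x hxb)
        · -- the bottom neighbour is not the maximal entry: recurse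
          have hmoves : (c.1 + 1, c.2) ≠ (cN.1, cN.2 + 1) := fun h => hb0 (by rw [h]; exact h4a)
          have hmoves2 : (c.1 + 1, c.2) ≠ (cN.1 + 1, cN.2) := fun h => hb0 (by rw [h]; exact h4b)
          have hb'0 : Function.update f cN 0 (c.1 + 1, c.2) = f (c.1 + 1, c.2) :=
            Function.update_of_ne hcase _ _
          have hB' : ¬ (Function.update f cN 0 (c.1 + 1, c.2) = 0 ∨
              (Function.update f cN 0 (c.1, c.2 + 1) ≠ 0 ∧
                Function.update f cN 0 (c.1, c.2 + 1) < Function.update f cN 0 (c.1 + 1, c.2))) := by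
            rw [hb'0]
            rcases eq_or_ne (c.1, c.2 + 1) cN with hrc | hrc
            · rw [hrc, Function.update_self]
              rintro (h | h)
              · exact hb0 h
              · exact h.1 rfl
            · rw [Function.update_of_ne hrc]; exact hB
          have hrb' : ¬ (Function.update f cN 0 (c.1, c.2 + 1) = 0 ∧
              Function.update f cN 0 (c.1 + 1, c.2) = 0) := by
            rw [hb'0]; exact fun h => hb0 h.2
          have hfeq' : jdtAux (k + 1) (Function.update f cN 0) c
              = jdtAux k (Function.update (Function.update (Function.update f cN 0) c
                  (f (c.1 + 1, c.2))) (c.1 + 1, c.2) 0) (c.1 + 1, c.2) := by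
            simp only [jdtAux]; rw [if_neg hrb', if_neg hB', hb'0]
          have hcomm : Function.update (Function.update (Function.update f cN 0) c
                  (f (c.1 + 1, c.2))) (c.1 + 1, c.2) 0
              = Function.update (Function.update (Function.update f c (f (c.1 + 1, c.2)))
                  (c.1 + 1, c.2) 0) cN 0 := by
            rw [Function.update_comm (Ne.symm h5), Function.update_comm (Ne.symm hcase)]
          obtain ⟨q, e1, e2, e3, e4, e5, e6⟩ := ih
            (Function.update (Function.update f c (f (c.1 + 1, c.2))) (c.1 + 1, c.2) 0)
            (c.1 + 1, c.2) cN
            (Function.update_self _ _ _)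
            (by rw [Function.update_of_ne (Ne.symm hcase), Function.update_of_ne (Ne.symm h5)]
                exact h2)
            (by intro x hx
                rcases eq_or_ne x (c.1 + 1, c.2) with rfl | hxb
                · rw [Function.update_self]; exact hn
                · rcases eq_or_ne x c with rfl | hxc
                  · rw [Function.update_of_ne hxb, Function.update_self]
                    exact h3 _ hcase
                  · rw [Function.update_of_ne hxb, Function.update_of_ne hxc]
                    exact h3 x hx)
            (by rw [Function.update_of_ne (Ne.symm hmoves), Function.update_of_ne (Ne.symm h7a)]
                exact h4a)
            (by rw [Function.update_of_ne (Ne.symm hmoves2), Function.update_of_ne (Ne.symm h7b)]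
                exact h4b)
            hcase hmoves hmoves2
          rw [hfeq, hfeq', hcomm]
          exact ⟨q, e1, e2, e3, e4, e5, e6⟩
lemma delRaw_spec (fuel : ℕ) (f : ℕ × ℕ → ℕ) (m : ℕ) (h0 : 0 < m)
    (c : ℕ × ℕ) (hc : f c = m) (huniq : ∀ x, f x = m → x = c) :
    delRaw fuel f m = fun x =>
      if m < jdtAux fuel (Function.update f c 0) c x
      then jdtAux fuel (Function.update f c 0) c x - 1
      else jdtAux fuel (Function.update f c 0) c x := by
  have h : 0 < m ∧ ∃ y, f y = m := ⟨h0, ⟨c, hc⟩⟩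
  have hch : Classical.choose h.2 = c := huniq _ (Classical.choose_spec h.2)
  rw [delRaw, dif_pos h, hch]
lemma key_identity (n : ℕ) (hn : 2 ≤ n) (T : SYT n) (m : ℕ) (hm1 : 1 ≤ m) (hm2 : m ≤ n - 1) :
    delRaw n (T.del n) m = delRaw n (T.del m) (n - 1) := by
  have hn0 : 0 < n := by omega
  have hmn : m < n := by omega
  -- the cell of the maximal entry n
  obtain ⟨cN, hcN⟩ := T.exists_cell n hn0 le_rfl
  have hNuniq : ∀ x, T.entry x = n → x = cN :=
    fun x hx => T.inj x cN (by rw [hx]; omega) (by rw [hx, hcN])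
  have hNr : T.entry (cN.1, cN.2 + 1) = 0 := by
    by_contra h
    have h1 := T.row_lt cN.1 cN.2 h
    have h2 := T.le_n (cN.1, cN.2 + 1)
    rw [Prod.mk.eta, hcN] at h1
    omega
  have hNb : T.entry (cN.1 + 1, cN.2) = 0 := by
    by_contra h
    have h1 := T.col_lt cN.1 cN.2 h
    have h2 := T.le_n (cN.1 + 1, cN.2)
    rw [Prod.mk.eta, hcN] at h1
    omega
  -- deleting n just erases the corner cell cN
  have hstepN : jdtAux n (Function.update T.entry cN 0) cN = Function.update T.entry cN 0 := by
    apply jdt_stop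
    · rw [Function.update_of_ne (by simp [Prod.ext_iff])]; exact hNr
    · rw [Function.update_of_ne (by simp [Prod.ext_iff])]; exact hNb
  have hdelN : T.del n = Function.update T.entry cN 0 := by
    rw [SYT.del, delRaw_spec n T.entry n hn0 cN hcN hNuniq, hstepN]
    funext x
    try simp only []
    rcases eq_or_ne x cN with rfl | hx
    · simp
    · rw [Function.update_of_ne hx]
      have := T.le_n x
      rw [if_neg (by omega)]
  -- the cell of the entry m
  obtain ⟨cm, hcm⟩ := T.exists_cell m hm1 (le_of_lt hmn)
  have hmuniq : ∀ x, T.entry x = m → x = cm :=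
    fun x hx => T.inj x cm (by rw [hx]; omega) (by rw [hx, hcm])
  have hcmN : cm ≠ cN := fun h => by rw [h, hcN] at hcm; omega
  have hrm : (cN.1, cN.2 + 1) ≠ cm := fun h => by rw [h, hcm] at hNr; omega
  have hbm : (cN.1 + 1, cN.2) ≠ cm := fun h => by rw [h, hcm] at hNb; omega
  -- apply the main comparison lemma
  obtain ⟨q, e1, e2, e3, e4, e5, e6⟩ := jdt_main n hn0 n
    (Function.update T.entry cm 0) cm cN
    (Function.update_self _ _ _)
    (by rw [Function.update_of_ne (Ne.symm hcmN)]; exact hcN)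
    (by intro x hx
        rcases eq_or_ne x cm with rfl | hxm
        · rw [Function.update_self]; omega
        · rw [Function.update_of_ne hxm]
          have h1 := T.le_n x
          rcases eq_or_ne (T.entry x) n with he | he
          · exact absurd (hNuniq x he) hx
          · omega)
    (by rw [Function.update_of_ne hrm]; exact hNr)
    (by rw [Function.update_of_ne hbm]; exact hNb)
    hcmN (Ne.symm hrm) (Ne.symm hbm)
  set f₀ := Function.update T.entry cm 0 with hf₀
  set g := jdtAux n f₀ cm with hg
  set g' := jdtAux n (Function.update f₀ cN 0) cm with hg'
  -- properties of g
  have hgle : ∀ x, g x ≤ n := by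
    apply jdt_pres (fun v => v ≤ n) (Nat.zero_le n)
    intro x
    rcases eq_or_ne x cm with rfl | hx
    · rw [hf₀, Function.update_self]; exact Nat.zero_le n
    · rw [hf₀, Function.update_of_ne hx]; exact T.le_n x
  have hgnm : ∀ x, g x ≠ m := by
    apply jdt_pres (fun v => v ≠ m) (by omega)
    intro x
    rcases eq_or_ne x cm with rfl | hx
    · rw [hf₀, Function.update_self]; omega
    · rw [hf₀, Function.update_of_ne hx]
      exact fun h => hx (hmuniq x h)
  -- computing T.del m
  have hTdelm : T.del m = fun x => if m < g x then g x - 1 else g x := by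
    rw [SYT.del, delRaw_spec n T.entry m hm1 cm hcm hmuniq]
  -- computing the left-hand side
  have hLHS : delRaw n (T.del n) m = fun x => if m < g' x then g' x - 1 else g' x := by
    rw [hdelN, delRaw_spec n (Function.update T.entry cN 0) m hm1 cm
      (by rw [Function.update_of_ne hcmN]; exact hcm)
      (by intro x hx
          rcases eq_or_ne x cN with rfl | hxN
          · rw [Function.update_self] at hx; omega
          · rw [Function.update_of_ne hxN] at hx; exact hmuniq x hx)]
    rw [Function.update_comm (Ne.symm hcmN)]
  -- computing the right-hand side
  have hq1 : T.del m q = n - 1 := by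
    rw [hTdelm]
    try simp only []
    rw [e3, if_pos hmn]
  have hquniq : ∀ x, T.del m x = n - 1 → x = q := by
    intro x hx
    by_contra hxq
    rw [hTdelm] at hx
    simp only [] at hx
    have hxn : g x ≠ n := e6 x hxq
    have h1 : g x ≤ n := hgle x
    have h2 : g x ≠ m := hgnm x
    by_cases hlt : m < g x
    · rw [if_pos hlt] at hx; omega
    · rw [if_neg hlt] at hx; omega
  have hstopq : jdtAux n (Function.update (T.del m) q 0) q = Function.update (T.del m) q 0 := by
    apply jdt_stop
    · rw [Function.update_of_ne (by simp [Prod.ext_iff]), hTdelm]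
      simp only []
      rw [e4, if_neg (by omega)]
    · rw [Function.update_of_ne (by simp [Prod.ext_iff]), hTdelm]
      simp only []
      rw [e5, if_neg (by omega)]
  have hbound : ∀ x, Function.update (T.del m) q 0 x ≤ n - 1 := by
    intro x
    rcases eq_or_ne x q with rfl | hxq
    · rw [Function.update_self]; omega
    · rw [Function.update_of_ne hxq, hTdelm]
      simp only []
      have h1 := hgle x
      have h2 := e6 x hxq
      by_cases hlt : m < g x
      · rw [if_pos hlt]; omega
      · rw [if_neg hlt]; omega
  have hRHS : delRaw n (T.del m) (n - 1) = Function.update (T.del m) q 0 := by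
    rw [delRaw_spec n (T.del m) (n - 1) (by omega) q hq1 hquniq, hstopq]
    funext x
    try simp only []
    rw [if_neg (by have := hbound x; omega)]
  -- conclude
  rw [hLHS, hRHS]
  funext x
  rcases eq_or_ne x q with rfl | hxq
  · rw [Function.update_self]
    try simp only []
    rw [e2, if_neg (by omega)]
  · rw [Function.update_of_ne hxq, hTdelm]
    try simp only []
    have hgx : g x = g' x := by rw [e1, Function.update_of_ne hxq]
    rw [hgx]
/-- The 1-minors of `T - n` are exactly the tableaux obtained by deleting the
entry `n - 1` from the 1-minors of `T`. -/
theorem syt_one_minors_of_del_largest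
    (n : ℕ) (hn : 2 ≤ n) (T : SYT n) :
    {g | ∃ m, 1 ≤ m ∧ m ≤ n - 1 ∧ g = delRaw n (T.del n) m} =
      {g | ∃ M ∈ minors1 T, g = delRaw n M (n - 1)} := by
  ext g
  simp only [Set.mem_setOf_eq]
  constructor
  · rintro ⟨m, h1, h2, rfl⟩
    exact ⟨T.del m, ⟨m, h1, by omega, rfl⟩, key_identity n hn T m h1 h2⟩
  · rintro ⟨M, hM, rfl⟩
    obtain ⟨m, h1, h2, rfl⟩ := hM
    rcases eq_or_ne m n with rfl | hne
    · exact ⟨m - 1, by omega, by omega, rfl⟩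
    · exact ⟨m, h1, by omega, (key_identity n hn T m h1 (by omega)).symm⟩
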